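/- arXiv:2212.11241 — 2 statements merged into one kernel-verified Lean document; each statement's English description precedes it below -/
import Mathlib

section
/- Let N ≥ 2 and let Ω = 𝕋^{N−1} × (0,1) with 𝕋^{N−1} = ℝ^{N−1}/ℤ^{N−1} the flat torus with its Haar (Lebesgue) measure; write x = (x′, x_N) and d(x) = min(x_N, 1−x_N). Let φ : (0,1/2) → (0,∞) satisfy φ(ε) → ∞ and ε·φ(ε) → κ ∈ (0,∞) as ε → 0⁺, and set b_ε(x) = 1 if d(x) ≥ ε, b_ε(x) = φ(ε) if d(x) < ε. Let M < ∞ and let (u^ε)_{ε∈(0,1/2)} ⊂ L²(Ω) satisfy ∫_Ω b_ε (u^ε)² dx ≤ M for all ε, u^ε → u₀ in L²(Ω), and (1/ε)∫₀^ε u^ε(·, s) ds → w⁰ and (1/ε)∫_{1−ε}^1 u^ε(·, s) ds → w¹ in L²(𝕋^{N−1}) as ε → 0⁺. Then for every continuous function f on 𝕋^{N−1} × [0,1]: ∫_Ω b_ε u^ε f dx → ∫_Ω u₀ f dx + κ ∫_{𝕋^{N−1}} w⁰(x′) f(x′, 0) dx′ + κ ∫_{𝕋^{N−1}} w¹(x′)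 f(x′, 1) dx′ as ε → 0⁺. -/
open MeasureTheory
open scoped ENNReal
noncomputable section

/-- Fundamental domain `[0,1)^n` of the flat torus `𝕋^n = ℝ^n/ℤ^n`. -/
def unitBox (n : ℕ) : Set (Fin n → ℝ) := Set.univ.pi fun _ => Set.Ico (0:ℝ) 1

/-- The flat cylinder `Ω = 𝕋^n × (0,1)`, realized as the fundamental domain
`[0,1)^n × (0,1)` inside `ℝ^n × ℝ`. -/
def cyl (n : ℕ) : Set ((Fin n → ℝ) × ℝ) := (unitBox n) ×ˢ Set.Ioo (0:ℝ) 1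

/-- The boundary-layer weight `b_ε`: equal to `1` on `Ω_ε = {d(x) ≥ ε}` and to
`φ(ε)` on the boundary layer `{d(x) < ε}`, where `d(x) = min(x_N, 1 − x_N)`. -/
def bWt (φε ε : ℝ) {n : ℕ} (p : (Fin n → ℝ) × ℝ) : ℝ :=
  if ε ≤ min p.2 (1 - p.2) then 1 else φε

/-!
Write `∫_Ω b_ε u^ε f = ∫_Ω u^ε f + (φ(ε) - 1) (J⁰_ε + J¹_ε)`, where `Jⁱ_ε` is the integral of
`u^ε f` over the layer of width `ε` at `x_N = i`. The bulk term converges because `u^ε → u₀` in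
`L²`. On a layer `b_ε = φ(ε)`, so `‖u^ε‖²_{L²(layer)} ≤ M / φ(ε)`; by Cauchy–Schwarz, replacing `f`
by its trace `f(·, i)` changes `φ(ε) Jⁱ_ε` by at most `o(1) · √(M ε φ(ε)) → 0`, and by Fubini
`φ(ε) ∫_layer u^ε f(·, i) = ε φ(ε) ∫ (layer average of u^ε) f(·, i) → κ ∫ wⁱ f(·, i)`.
Since `φ(ε) → ∞`, this also forces `Jⁱ_ε → 0`, so the factor `φ(ε) - 1` may be replaced by `φ(ε)`.
-/

open Set Filter Topology

section SquareIntegrable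

variable {α : Type*} [MeasurableSpace α] {μ : Measure α} {h g : α → ℝ}

lemma lintegral_ofReal_abs_le_sqrt (hh : AEMeasurable h μ) {A V : ℝ} (hA0 : 0 ≤ A) (hV0 : 0 ≤ V)
    (hA : ∫⁻ a, ENNReal.ofReal (h a ^ 2) ∂μ ≤ ENNReal.ofReal A) (hV : μ univ ≤ ENNReal.ofReal V) :
    ∫⁻ a, ENNReal.ofReal |h a| ∂μ ≤ ENNReal.ofReal √(A * V) := by
  have hsq : ∀ a, ENNReal.ofReal |h a| ^ (2 : ℝ) = ENNReal.ofReal (h a ^ 2) := fun a => by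
    rw [ENNReal.ofReal_rpow_of_nonneg (abs_nonneg _) zero_le_two, Real.rpow_two, sq_abs]
  have holder := ENNReal.lintegral_mul_le_Lp_mul_Lq μ Real.HolderConjugate.two_two
    (f := fun a => ENNReal.ofReal |h a|) (g := fun _ => 1) hh.abs.ennreal_ofReal aemeasurable_const
  simp only [Pi.mul_apply, mul_one, ENNReal.one_rpow, lintegral_const, one_mul, hsq] at holder
  calc ∫⁻ a, ENNReal.ofReal |h a| ∂μ
      ≤ (∫⁻ a, ENNReal.ofReal (h a ^ 2) ∂μ) ^ (1 / 2 : ℝ) * μ univ ^ (1 / 2 : ℝ) := holder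
    _ ≤ ENNReal.ofReal A ^ (1 / 2 : ℝ) * ENNReal.ofReal V ^ (1 / 2 : ℝ) := by gcongr
    _ = ENNReal.ofReal √(A * V) := by
      rw [ENNReal.ofReal_rpow_of_nonneg hA0 (by norm_num),
        ENNReal.ofReal_rpow_of_nonneg hV0 (by norm_num), ← Real.sqrt_eq_rpow, ← Real.sqrt_eq_rpow, ← ENNReal.ofReal_mul (Real.sqrt_nonneg _),
        Real.sqrt_mul hA0]

lemma norm_integral_mul_le_of_lintegral_sq_le (hh : AEMeasurable h μ) {A V C : ℝ} (hA0 : 0 ≤ A)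
    (hV0 : 0 ≤ V) (hC : 0 ≤ C) (hA : ∫⁻ a, ENNReal.ofReal (h a ^ 2) ∂μ ≤ ENNReal.ofReal A)
    (hV : μ univ ≤ ENNReal.ofReal V) (hg : ∀ᵐ a ∂μ, ‖g a‖ ≤ C) :
    ‖∫ a, h a * g a ∂μ‖ ≤ C * √(A * V) := by
  refine (norm_integral_le_lintegral_norm _).trans
    (ENNReal.toReal_le_of_le_ofReal (by positivity) ?_)
  calc ∫⁻ a, ENNReal.ofReal ‖h a * g a‖ ∂μ
      ≤ ∫⁻ a, ENNReal.ofReal |h a| * ENNReal.ofReal C ∂μ := by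
        refine lintegral_mono_ae (hg.mono fun a ha => ?_)
        rw [← ENNReal.ofReal_mul (abs_nonneg _), norm_mul, Real.norm_eq_abs]
        gcongr
    _ = (∫⁻ a, ENNReal.ofReal |h a| ∂μ) * ENNReal.ofReal C :=
        lintegral_mul_const' _ _ ENNReal.ofReal_ne_top
    _ ≤ ENNReal.ofReal √(A * V) * ENNReal.ofReal C := by
        gcongr; exact lintegral_ofReal_abs_le_sqrt hh hA0 hV0 hA hV
    _ = ENNReal.ofReal (C * √(A * V)) := by
        rw [← ENNReal.ofReal_mul (Real.sqrt_nonneg _), mul_comm]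

lemma integrable_of_lintegral_sq_ne_top [IsFiniteMeasure μ] (hh : AEStronglyMeasurable h μ)
    (h2 : ∫⁻ a, ENNReal.ofReal (h a ^ 2) ∂μ ≠ ⊤) : Integrable h μ :=
  ((memLp_two_iff_integrable_sq hh).2 ⟨hh.pow 2,
    (hasFiniteIntegral_iff_ofReal (ae_of_all _ fun _ => sq_nonneg _)).2 h2.lt_top⟩).integrable
    one_le_two

variable [IsFiniteMeasure μ] {ι : Type*} {l : Filter ι} {u : ι → α → ℝ} {u₀ : α → ℝ}

lemma eventually_integrable_of_tendsto_lintegral_sq_sub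
    (hu : ∀ᶠ i in l, AEStronglyMeasurable (u i) μ) (hu₀ : AEStronglyMeasurable u₀ μ)
    (hu₀2 : ∫⁻ a, ENNReal.ofReal (u₀ a ^ 2) ∂μ ≠ ⊤)
    (hconv : Tendsto (fun i => ∫⁻ a, ENNReal.ofReal ((u i a - u₀ a) ^ 2) ∂μ) l (𝓝 0)) :
    ∀ᶠ i in l, Integrable (u i) μ := by
  filter_upwards [hu, hconv.eventually_lt_const ENNReal.zero_lt_top] with i hi hfin
  simpa using (integrable_of_lintegral_sq_ne_top (hi.sub hu₀) hfin.ne).add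
    (integrable_of_lintegral_sq_ne_top hu₀ hu₀2)

lemma tendsto_integral_mul_of_tendsto_lintegral_sq_sub
    (hu : ∀ᶠ i in l, AEStronglyMeasurable (u i) μ) (hu₀ : AEStronglyMeasurable u₀ μ)
    (hu₀2 : ∫⁻ a, ENNReal.ofReal (u₀ a ^ 2) ∂μ ≠ ⊤)
    (hconv : Tendsto (fun i => ∫⁻ a, ENNReal.ofReal ((u i a - u₀ a) ^ 2) ∂μ) l (𝓝 0))
    (hg : AEStronglyMeasurable g μ) {C : ℝ} (hgC : ∀ᵐ a ∂μ, ‖g a‖ ≤ C) :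
    Tendsto (fun i => ∫ a, u i a * g a ∂μ) l (𝓝 (∫ a, u₀ a * g a ∂μ)) := by
  set D := fun i => ∫⁻ a, ENNReal.ofReal ((u i a - u₀ a) ^ 2) ∂μ
  have hgC' : ∀ᵐ a ∂μ, ‖g a‖ ≤ max C 0 := hgC.mono fun _ ha => ha.trans (le_max_left _ _)
  have hdiff : Tendsto (fun i => ∫ a, (u i a - u₀ a) * g a ∂μ) l (𝓝 0) := by
    have hbound : Tendsto (fun i => max C 0 * √((D i).toReal * μ.real univ)) l
        (𝓝 (max C 0 * √(0 * μ.real univ))) :=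
      (((ENNReal.tendsto_toReal ENNReal.zero_ne_top).comp hconv).mul_const _).sqrt.const_mul _
    refine squeeze_zero_norm' (a := fun i => max C 0 * √((D i).toReal * μ.real univ)) ?_
      (by simpa using hbound)
    filter_upwards [hu, hconv.eventually_lt_const ENNReal.zero_lt_top] with i hi hfin
    exact norm_integral_mul_le_of_lintegral_sq_le (hi.sub hu₀).aemeasurable ENNReal.toReal_nonneg
      measureReal_nonneg (le_max_right _ _) (ENNReal.ofReal_toReal hfin.ne).ge
      (ENNReal.ofReal_toReal (measure_ne_top _ _)).ge hgC'
  have hu₀g : Integrable (fun a => u₀ a * g a) μ :=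
    (integrable_of_lintegral_sq_ne_top hu₀ hu₀2).mul_bdd hg hgC
  have hsum := hdiff.add_const (∫ a, u₀ a * g a ∂μ)
  rw [zero_add] at hsum
  refine hsum.congr' ?_
  filter_upwards [eventually_integrable_of_tendsto_lintegral_sq_sub hu hu₀ hu₀2 hconv] with i hi
  have hdiffg : Integrable (fun a => (u i a - u₀ a) * g a) μ :=
    (hi.sub (integrable_of_lintegral_sq_ne_top hu₀ hu₀2)).mul_bdd hg hgC
  rw [← integral_add hdiffg hu₀g]
  simp only [sub_mul, sub_add_cancel]

end SquareIntegrable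

lemma Continuous.exists_forall_norm_le_of_isBounded {X E : Type*} [PseudoMetricSpace X]
    [ProperSpace X] [SeminormedAddGroup E] {g : X → E} (hg : Continuous g) {s : Set X}
    (hs : Bornology.IsBounded s) : ∃ C, ∀ x ∈ s, ‖g x‖ ≤ C := by
  obtain ⟨C, hC⟩ := hs.isCompact_closure.exists_bound_of_continuousOn hg.continuousOn
  exact ⟨C, fun x hx => hC x (subset_closure hx)⟩

lemma IsCompact.eventually_forall_norm_sub_le {X E : Type*} [TopologicalSpace X]
    [SeminormedAddCommGroup E] {K : Set X} (hK : IsCompact K) {f : X × ℝ → E} (hf : Continuous f)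
    (t : ℝ) {δ : ℝ} (hδ : 0 < δ) :
    ∀ᶠ ε in 𝓝 0, ∀ x ∈ K, ∀ s ∈ Icc (t - ε) (t + ε), ‖f (x, s) - f (x, t)‖ ≤ δ := by
  have hnear : ∀ᶠ s in 𝓝 t, ∀ x ∈ K, ‖f (x, s) - f (x, t)‖ < δ :=
    hK.eventually_forall_of_forall_eventually fun x _ => by
      have hc : Continuous fun z : ℝ × X => ‖f (z.2, z.1) - f (z.2, t)‖ :=
        ((hf.comp (continuous_snd.prodMk continuous_fst)).sub
          (hf.comp (continuous_snd.prodMk continuous_const))).norm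
      exact hc.continuousAt.eventually_lt continuousAt_const (by simpa using hδ)
  obtain ⟨η, hη, hball⟩ := Metric.eventually_nhds_iff.1 hnear
  filter_upwards [Iio_mem_nhds hη] with ε hε x hx s hs
  refine (hball ?_ x hx).le
  rw [Real.dist_eq, abs_lt]
  constructor <;> linarith [hs.1, hs.2, show ε < η from hε]

lemma tendsto_zero_of_forall_eventually_norm_le_mul {ι E : Type*} [SeminormedAddGroup E]
    {l : Filter ι} {x : ι → E} {g : ι → ℝ} {L : ℝ} (hg : Tendsto g l (𝓝 L))
    (hx : ∀ δ > 0, ∀ᶠ i in l, ‖x i‖ ≤ δ * g i) : Tendsto x l (𝓝 0) := by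
  rw [Metric.tendsto_nhds]
  intro r hr
  have hK : 0 < |L| + 2 := by positivity
  filter_upwards [hx (r / (|L| + 2)) (div_pos hr hK),
    hg.eventually_lt_const (show L < |L| + 1 by linarith [le_abs_self L])] with i hi hgi
  rw [dist_zero_right]
  calc ‖x i‖ ≤ r / (|L| + 2) * g i := hi
    _ ≤ r / (|L| + 2) * (|L| + 1) := by gcongr
    _ < r / (|L| + 2) * (|L| + 2) := by gcongr; linarith
    _ = r := div_mul_cancel₀ r hK.ne'

lemma tendsto_sub_one_mul_of_tendsto_mul {ι : Type*} {l : Filter ι} {φ x : ι → ℝ} {L : ℝ}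
    (hφ : Tendsto φ l atTop) (h : Tendsto (fun i => φ i * x i) l (𝓝 L)) :
    Tendsto (fun i => (φ i - 1) * x i) l (𝓝 L) := by
  have hx : Tendsto x l (𝓝 0) := by
    have hlim := h.mul (tendsto_inv_atTop_zero.comp hφ)
    rw [mul_zero] at hlim
    refine hlim.congr' ?_
    filter_upwards [hφ.eventually_ne_atTop 0] with i hi
    rw [Function.comp_apply, mul_right_comm, mul_inv_cancel₀ hi, one_mul]
  simpa [sub_mul] using h.sub hx

lemma setIntegral_prod_Ioo_mul_fst {X : Type*} [MeasureSpace X] [SFinite (volume : Measure X)]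
    {s : Set X} {a b : ℝ} {u : X × ℝ → ℝ} {g : X → ℝ}
    (hu : IntegrableOn (fun p => u p * g p.1) (s ×ˢ Ioo a b)) :
    ∫ p in s ×ˢ Ioo a b, u p * g p.1 = ∫ x in s, (∫ y in Ioc a b, u (x, y)) * g x := by
  rw [Measure.volume_eq_prod] at hu ⊢
  rw [setIntegral_prod _ hu]
  simp_rw [integral_Ioc_eq_integral_Ioo, integral_mul_const]

lemma measurableSet_unitBox (n : ℕ) : MeasurableSet (unitBox n) :=
  MeasurableSet.univ_pi fun _ => measurableSet_Ico

lemma unitBox_subset_Icc (n : ℕ) : unitBox n ⊆ Icc 0 1 := fun _ hx =>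
  ⟨fun i => (hx i trivial).1, fun i => (hx i trivial).2.le⟩

lemma isBounded_unitBox (n : ℕ) : Bornology.IsBounded (unitBox n) :=
  (Metric.isBounded_Icc (0 : Fin n → ℝ) 1).subset (unitBox_subset_Icc n)

lemma volume_unitBox_prod (n : ℕ) (s : Set ℝ) : volume (unitBox n ×ˢ s) = volume s := by
  rw [Measure.volume_eq_prod, Measure.prod_prod, unitBox, volume_pi_pi]
  simp

lemma measurableSet_cyl (n : ℕ) : MeasurableSet (cyl n) :=
  (measurableSet_unitBox n).prod measurableSet_Ioo

lemma isBounded_cyl (n : ℕ) : Bornology.IsBounded (cyl n) :=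
  (isBounded_unitBox n).prod (Metric.isBounded_Ioo 0 1)

lemma setLIntegral_sq_le_of_bWt {n : ℕ} {c ε M : ℝ} (hc : 0 < c) {v : (Fin n → ℝ) × ℝ → ℝ}
    {s : Set ℝ} (hs : MeasurableSet s) (hs01 : s ⊆ Ioo 0 1) (hsε : ∀ y ∈ s, min y (1 - y) < ε)
    (hM : ∫⁻ p in cyl n, ENNReal.ofReal (bWt c ε p * v p ^ 2) ≤ ENNReal.ofReal M) :
    ∫⁻ p in unitBox n ×ˢ s, ENNReal.ofReal (v p ^ 2) ≤ ENNReal.ofReal (M / c) := by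
  calc ∫⁻ p in unitBox n ×ˢ s, ENNReal.ofReal (v p ^ 2)
      = ∫⁻ p in unitBox n ×ˢ s, ENNReal.ofReal c⁻¹ * ENNReal.ofReal (bWt c ε p * v p ^ 2) := by
        refine setLIntegral_congr_fun ((measurableSet_unitBox n).prod hs) fun p hp => ?_
        rw [bWt, if_neg (not_le.2 (hsε _ hp.2)), ← ENNReal.ofReal_mul (inv_nonneg.2 hc.le),
          inv_mul_cancel_left₀ hc.ne']
    _ = ENNReal.ofReal c⁻¹ * ∫⁻ p in unitBox n ×ˢ s, ENNReal.ofReal (bWt c ε p * v p ^ 2) :=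
        lintegral_const_mul' _ _ ENNReal.ofReal_ne_top
    _ ≤ ENNReal.ofReal c⁻¹ * ENNReal.ofReal M := by
        gcongr
        exact (lintegral_mono_set (prod_mono subset_rfl hs01)).trans hM
    _ = ENNReal.ofReal (M / c) := by
        rw [← ENNReal.ofReal_mul (inv_nonneg.2 hc.le), inv_mul_eq_div]

lemma setLIntegral_sq_Ioo_zero_le_of_bWt {n : ℕ} {c ε M : ℝ} (hc : 0 < c) (hε : ε ≤ 1)
    {v : (Fin n → ℝ) × ℝ → ℝ}
    (hM : ∫⁻ p in cyl n, ENNReal.ofReal (bWt c ε p * v p ^ 2) ≤ ENNReal.ofReal M) :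
    ∫⁻ p in unitBox n ×ˢ Ioo 0 ε, ENNReal.ofReal (v p ^ 2) ≤ ENNReal.ofReal (M / c) :=
  setLIntegral_sq_le_of_bWt hc measurableSet_Ioo (Ioo_subset_Ioo_right hε)
    (fun _ hy => (min_le_left _ _).trans_lt hy.2) hM

lemma setLIntegral_sq_Ioo_one_le_of_bWt {n : ℕ} {c ε M : ℝ} (hc : 0 < c) (hε : ε ≤ 1)
    {v : (Fin n → ℝ) × ℝ → ℝ}
    (hM : ∫⁻ p in cyl n, ENNReal.ofReal (bWt c ε p * v p ^ 2) ≤ ENNReal.ofReal M) :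
    ∫⁻ p in unitBox n ×ˢ Ioo (1 - ε) 1, ENNReal.ofReal (v p ^ 2) ≤ ENNReal.ofReal (M / c) :=
  setLIntegral_sq_le_of_bWt hc measurableSet_Ioo (Ioo_subset_Ioo_left (by linarith))
    (fun _ hy => (min_le_right _ _).trans_lt (by linarith [hy.1])) hM

lemma cyl_inter_setOf_min_lt {n : ℕ} {ε : ℝ} (hε : ε ≤ 1 / 2) :
    cyl n ∩ {p | min p.2 (1 - p.2) < ε} = unitBox n ×ˢ Ioo 0 ε ∪ unitBox n ×ˢ Ioo (1 - ε) 1 := by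
  ext p
  simp only [cyl, mem_inter_iff, mem_prod, mem_Ioo, mem_union, mem_ofPred_eq, min_lt_iff]
  constructor
  · rintro ⟨⟨hx, h0, h1⟩, hlow | hhigh⟩
    · exact Or.inl ⟨hx, h0, hlow⟩
    · exact Or.inr ⟨hx, by linarith, h1⟩
  · rintro (⟨hx, h0, h1⟩ | ⟨hx, h0, h1⟩)
    · exact ⟨⟨hx, h0, by linarith⟩, Or.inl h1⟩
    · exact ⟨⟨hx, by linarith, h1⟩, Or.inr (by linarith)⟩

lemma integral_cyl_bWt_mul {n : ℕ} {c ε : ℝ} (hε : ε ≤ 1 / 2) {g : (Fin n → ℝ) × ℝ → ℝ}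
    (hg : IntegrableOn g (cyl n)) :
    ∫ p in cyl n, bWt c ε p * g p = (∫ p in cyl n, g p) + (c - 1) *
      ((∫ p in unitBox n ×ˢ Ioo 0 ε, g p) + ∫ p in unitBox n ×ˢ Ioo (1 - ε) 1, g p) := by
  set L : Set ((Fin n → ℝ) × ℝ) := {p | min p.2 (1 - p.2) < ε}
  have hL : MeasurableSet L :=
    measurableSet_lt (measurable_snd.min (measurable_const.sub measurable_snd)) measurable_const
  have hbWt : ∀ p, bWt c ε p * g p = g p + (c - 1) * L.indicator g p := fun p => by
    by_cases hp : p ∈ L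
    · rw [indicator_of_mem hp, bWt, if_neg (not_le.2 hp)]; ring
    · rw [indicator_of_notMem hp, bWt, if_pos (not_lt.1 hp)]; ring
  have hdisj : Disjoint (unitBox n ×ˢ Ioo 0 ε) (unitBox n ×ˢ Ioo (1 - ε) 1) :=
    disjoint_prod.2 <| Or.inr <| disjoint_left.2 fun y h0 h1 => by linarith [h0.2, h1.1]
  have hsub : unitBox n ×ˢ Ioo 0 ε ∪ unitBox n ×ˢ Ioo (1 - ε) 1 ⊆ cyl n :=
    cyl_inter_setOf_min_lt (n := n) hε ▸ inter_subset_left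
  simp_rw [hbWt]
  rw [integral_add hg ((hg.indicator hL).const_mul _), integral_const_mul,
    setIntegral_indicator hL, cyl_inter_setOf_min_lt hε,
    setIntegral_union hdisj ((measurableSet_unitBox n).prod measurableSet_Ioo)
      (hg.mono_set (subset_union_left.trans hsub)) (hg.mono_set (subset_union_right.trans hsub))]

section Layer

variable {n : ℕ} {l : Filter ℝ} {φ : ℝ → ℝ} {κ M : ℝ} {u : ℝ → (Fin n → ℝ) × ℝ → ℝ}
  {a b : ℝ → ℝ} {t : ℝ} {f : (Fin n → ℝ) × ℝ → ℝ}

lemma tendsto_mul_integral_layer_sub (hl : l ≤ 𝓝[>] 0) (hM : 0 ≤ M) (hφ : ∀ᶠ ε in l, 0 < φ ε)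
    (hφκ : Tendsto (fun ε => ε * φ ε) l (𝓝 κ)) (hu : ∀ᶠ ε in l, Measurable (u ε))
    (hab : ∀ ε, b ε - a ε = ε) (hsub : ∀ ε, Ioo (a ε) (b ε) ⊆ Icc (t - ε) (t + ε))
    (hL2 : ∀ᶠ ε in l, ∫⁻ p in unitBox n ×ˢ Ioo (a ε) (b ε), ENNReal.ofReal (u ε p ^ 2)
      ≤ ENNReal.ofReal (M / φ ε))
    (hf : Continuous f) :
    Tendsto (fun ε => φ ε * ∫ p in unitBox n ×ˢ Ioo (a ε) (b ε), u ε p * (f p - f (p.1, t)))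
      l (𝓝 0) := by
  refine tendsto_zero_of_forall_eventually_norm_le_mul ((hφκ.const_mul M).sqrt) fun δ hδ => ?_
  have hfδ := (isCompact_Icc (a := (0 : Fin n → ℝ)) (b := 1)).eventually_forall_norm_sub_le hf t hδ
  filter_upwards [hl self_mem_nhdsWithin, hφ, hu, hL2, (hl.trans nhdsWithin_le_nhds) hfδ]
    with ε hε hφε huε hL2ε hfε
  have hvol : volume (unitBox n ×ˢ Ioo (a ε) (b ε)) = ENNReal.ofReal ε := by
    rw [volume_unitBox_prod, Real.volume_Ioo, hab]
  have hE := norm_integral_mul_le_of_lintegral_sq_le huε.aemeasurable.restrict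
    (div_nonneg hM hφε.le) (le_of_lt hε) hδ.le hL2ε
    (by rw [Measure.restrict_apply_univ, hvol])
    (ae_restrict_of_forall_mem ((measurableSet_unitBox n).prod measurableSet_Ioo)
      fun p hp => hfε p.1 (unitBox_subset_Icc n hp.1) p.2 (hsub ε hp.2))
  calc ‖φ ε * ∫ p in unitBox n ×ˢ Ioo (a ε) (b ε), u ε p * (f p - f (p.1, t))‖
      = φ ε * ‖∫ p in unitBox n ×ˢ Ioo (a ε) (b ε), u ε p * (f p - f (p.1, t))‖ := by
        rw [norm_mul, Real.norm_of_nonneg hφε.le]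
    _ ≤ φ ε * (δ * √(M / φ ε * ε)) := by gcongr
    _ = δ * √(M * (ε * φ ε)) := by
        have hsplit : M * (ε * φ ε) = M / φ ε * ε * φ ε ^ 2 := by field_simp
        rw [hsplit, Real.sqrt_mul (mul_nonneg (div_nonneg hM hφε.le) (le_of_lt hε)),
          Real.sqrt_sq hφε.le]
        ring

theorem tendsto_mul_integral_layer (hl : l ≤ 𝓝[>] 0) (hM : 0 ≤ M) (hφ : ∀ᶠ ε in l, 0 < φ ε)
    (hφκ : Tendsto (fun ε => ε * φ ε) l (𝓝 κ)) (hu : ∀ᶠ ε in l, Measurable (u ε))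
    (hab : ∀ ε, b ε - a ε = ε) (hsub : ∀ ε, Ioo (a ε) (b ε) ⊆ Icc (t - ε) (t + ε))
    (hL2 : ∀ᶠ ε in l, ∫⁻ p in unitBox n ×ˢ Ioo (a ε) (b ε), ENNReal.ofReal (u ε p ^ 2)
      ≤ ENNReal.ofReal (M / φ ε))
    {w : (Fin n → ℝ) → ℝ} (hw : Measurable w)
    (hw2 : ∫⁻ x in unitBox n, ENNReal.ofReal (w x ^ 2) ≠ ⊤)
    (havg : Tendsto (fun ε => ∫⁻ x in unitBox n,
      ENNReal.ofReal (((1 / ε) * (∫ s in Ioc (a ε) (b ε), u ε (x, s)) - w x) ^ 2)) l (𝓝 0))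
    (hf : Continuous f) :
    Tendsto (fun ε => φ ε * ∫ p in unitBox n ×ˢ Ioo (a ε) (b ε), u ε p * f p)
      l (𝓝 (κ * ∫ x in unitBox n, w x * f (x, t))) := by
  have hg : Continuous fun x => f (x, t) := hf.comp (continuous_id.prodMk continuous_const)
  have hg₁ : Continuous fun p : (Fin n → ℝ) × ℝ => f (p.1, t) :=
    hf.comp (continuous_fst.prodMk continuous_const)
  have : IsFiniteMeasure (volume.restrict (unitBox n)) :=
    isFiniteMeasure_restrict.2 (isBounded_unitBox n).measure_lt_top.ne
  obtain ⟨C, hC⟩ := hg.exists_forall_norm_le_of_isBounded (isBounded_unitBox n)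
  have havg_meas : ∀ᶠ ε in l, AEStronglyMeasurable
      (fun x => (1 / ε) * ∫ s in Ioc (a ε) (b ε), u ε (x, s)) (volume.restrict (unitBox n)) :=
    hu.mono fun ε huε =>
      (huε.stronglyMeasurable.integral_prod_right'.measurable.const_mul _).aestronglyMeasurable
  have hlim := (tendsto_mul_integral_layer_sub hl hM hφ hφκ hu hab hsub hL2 hf).add
    (hφκ.mul (tendsto_integral_mul_of_tendsto_lintegral_sq_sub havg_meas hw.aestronglyMeasurable
      hw2 havg hg.aestronglyMeasurable (ae_restrict_of_forall_mem (measurableSet_unitBox n) hC)))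
  rw [zero_add] at hlim
  refine hlim.congr' ?_
  -- by Fubini, `∫_layer u f(·, t) = ε ∫ (layer average of u) f(·, t)`
  filter_upwards [hl self_mem_nhdsWithin, hu, hL2] with ε hε huε hL2ε
  set S := unitBox n ×ˢ Ioo (a ε) (b ε)
  have hSm : MeasurableSet S := (measurableSet_unitBox n).prod measurableSet_Ioo
  have hSb : Bornology.IsBounded S := (isBounded_unitBox n).prod (Metric.isBounded_Ioo _ _)
  have : IsFiniteMeasure (volume.restrict S) := isFiniteMeasure_restrict.2 hSb.measure_lt_top.ne
  have huS : IntegrableOn (u ε) S := integrable_of_lintegral_sq_ne_top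
    huε.aestronglyMeasurable (ne_top_of_le_ne_top ENNReal.ofReal_ne_top hL2ε)
  obtain ⟨C₁, hC₁⟩ := hf.exists_forall_norm_le_of_isBounded hSb
  obtain ⟨C₂, hC₂⟩ := hg₁.exists_forall_norm_le_of_isBounded hSb
  have hufS := huS.mul_bdd hf.aestronglyMeasurable (ae_restrict_of_forall_mem hSm hC₁)
  have hugS := huS.mul_bdd hg₁.aestronglyMeasurable (ae_restrict_of_forall_mem hSm hC₂)
  have hε0 : ε ≠ 0 := ne_of_gt hε
  simp_rw [mul_sub, mul_assoc (1 / ε)]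
  rw [integral_sub hufS hugS, integral_const_mul,
    setIntegral_prod_Ioo_mul_fst (u := u ε) (g := fun x => f (x, t)) hugS]
  field_simp
  ring

end Layer

theorem boundary_layer_pairing_limit_general
    (n : ℕ) (κ : ℝ)
    (φ : ℝ → ℝ)
    (hφ_top : Filter.Tendsto φ (nhdsWithin 0 (Set.Ioo 0 (1/2))) Filter.atTop)
    (hφκ : Filter.Tendsto (fun ε => ε * φ ε) (nhdsWithin 0 (Set.Ioo 0 (1/2))) (nhds κ))
    (M : ℝ)
    (u : ℝ → ((Fin n → ℝ) × ℝ) → ℝ)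
    (hu_meas : ∀ ε ∈ Set.Ioo (0:ℝ) (1/2), Measurable (u ε))
    (hu_bdd : ∀ ε ∈ Set.Ioo (0:ℝ) (1/2),
      ∫⁻ p in cyl n, ENNReal.ofReal (bWt (φ ε) ε p * (u ε p) ^ 2) ≤ ENNReal.ofReal M)
    (u₀ : (Fin n → ℝ) × ℝ → ℝ) (hu₀_meas : Measurable u₀)
    (hu₀_L2 : ∫⁻ p in cyl n, ENNReal.ofReal ((u₀ p) ^ 2) < ⊤)
    (hu_conv : Filter.Tendsto
      (fun ε => ∫⁻ p in cyl n, ENNReal.ofReal ((u ε p - u₀ p) ^ 2))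
      (nhdsWithin 0 (Set.Ioo 0 (1/2))) (nhds 0))
    (w0 w1 : (Fin n → ℝ) → ℝ) (hw0_meas : Measurable w0) (hw1_meas : Measurable w1)
    (hw0_L2 : ∫⁻ x' in unitBox n, ENNReal.ofReal ((w0 x') ^ 2) < ⊤)
    (hw1_L2 : ∫⁻ x' in unitBox n, ENNReal.ofReal ((w1 x') ^ 2) < ⊤)
    (havg0 : Filter.Tendsto
      (fun ε => ∫⁻ x' in unitBox n,
        ENNReal.ofReal (((1/ε) * (∫ s in Set.Ioc (0:ℝ) ε, u ε (x', s)) - w0 x') ^ 2))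
      (nhdsWithin 0 (Set.Ioo 0 (1/2))) (nhds 0))
    (havg1 : Filter.Tendsto
      (fun ε => ∫⁻ x' in unitBox n,
        ENNReal.ofReal (((1/ε) * (∫ s in Set.Ioc (1 - ε) 1, u ε (x', s)) - w1 x') ^ 2))
      (nhdsWithin 0 (Set.Ioo 0 (1/2))) (nhds 0))
    (f : (Fin n → ℝ) × ℝ → ℝ) (hf : Continuous f) :
    Filter.Tendsto
      (fun ε => ∫ p in cyl n, bWt (φ ε) ε p * u ε p * f p)
      (nhdsWithin 0 (Set.Ioo 0 (1/2)))
      (nhds ((∫ p in cyl n, u₀ p * f p)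
        + κ * (∫ x' in unitBox n, w0 x' * f (x', 0))
        + κ * (∫ x' in unitBox n, w1 x' * f (x', 1)))) := by
  have hl : 𝓝[Ioo 0 (1 / 2)] (0 : ℝ) ≤ 𝓝[>] 0 := nhdsWithin_mono _ Ioo_subset_Ioi_self
  have hε : ∀ᶠ ε in 𝓝[Ioo 0 (1 / 2)] (0 : ℝ), ε ∈ Ioo (0 : ℝ) (1 / 2) := self_mem_nhdsWithin
  have hφ : ∀ᶠ ε in 𝓝[Ioo 0 (1 / 2)] (0 : ℝ), 0 < φ ε := hφ_top.eventually_gt_atTop 0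
  have hu := hε.mono hu_meas
  have hbdd : ∀ ε ∈ Ioo (0 : ℝ) (1 / 2),
      ∫⁻ p in cyl n, ENNReal.ofReal (bWt (φ ε) ε p * u ε p ^ 2) ≤ ENNReal.ofReal (max M 0) :=
    fun ε hε => (hu_bdd ε hε).trans (ENNReal.ofReal_le_ofReal (le_max_left M 0))
  have hbot := tendsto_mul_integral_layer hl (le_max_right M 0) hφ hφκ hu
    (a := fun _ => 0) (b := fun ε => ε) (t := 0) sub_zero
    (fun ε y hy => ⟨by linarith [hy.1, hy.2], by linarith [hy.2]⟩)
    (by filter_upwards [hε, hφ] with ε hε hφε using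
      setLIntegral_sq_Ioo_zero_le_of_bWt hφε (by linarith [hε.2]) (hbdd ε hε))
    hw0_meas hw0_L2.ne havg0 hf
  have htop := tendsto_mul_integral_layer hl (le_max_right M 0) hφ hφκ hu
    (a := fun ε => 1 - ε) (b := fun _ => 1) (t := 1) (sub_sub_cancel 1)
    (fun ε y hy => ⟨hy.1.le, by linarith [hy.1, hy.2]⟩)
    (by filter_upwards [hε, hφ] with ε hε hφε using
      setLIntegral_sq_Ioo_one_le_of_bWt hφε (by linarith [hε.2]) (hbdd ε hε))
    hw1_meas hw1_L2.ne havg1 hf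
  have : IsFiniteMeasure (volume.restrict (cyl n)) :=
    isFiniteMeasure_restrict.2 (isBounded_cyl n).measure_lt_top.ne
  obtain ⟨C, hC⟩ := hf.exists_forall_norm_le_of_isBounded (isBounded_cyl n)
  have hfC := ae_restrict_of_forall_mem (μ := volume) (measurableSet_cyl n) hC
  have hu' := hu.mono fun ε h => h.aestronglyMeasurable (μ := volume.restrict (cyl n))
  have hbulk := tendsto_integral_mul_of_tendsto_lintegral_sq_sub hu'
    hu₀_meas.aestronglyMeasurable hu₀_L2.ne hu_conv hf.aestronglyMeasurable hfC
  rw [add_assoc]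
  refine (hbulk.add ((tendsto_sub_one_mul_of_tendsto_mul hφ_top hbot).add
    (tendsto_sub_one_mul_of_tendsto_mul hφ_top htop))).congr' ?_
  filter_upwards [hε, eventually_integrable_of_tendsto_lintegral_sq_sub hu'
    hu₀_meas.aestronglyMeasurable hu₀_L2.ne hu_conv] with ε hε hint
  simp_rw [mul_assoc (bWt _ _ _)]
  rw [integral_cyl_bWt_mul hε.2.le (hint.mul_bdd hf.aestronglyMeasurable hfC)]
  ring

/-- Boundary-layer pairing limit: for well prepared families (uniformly bounded
`b_ε`-weighted `L²` norms, `u^ε → u₀` in `L²(Ω)`, boundary-layer averages converging to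
`w⁰`, `w¹` in `L²(𝕋ⁿ)`), and `ε·φ(ε) → κ ∈ (0,∞)`, the pairing of `b_ε u^ε` against any
continuous function `f` on `𝕋ⁿ × [0,1]` converges to
`∫_Ω u₀ f + κ∫ w⁰ f(·,0) + κ∫ w¹ f(·,1)`. -/
theorem boundary_layer_pairing_limit
    (n : ℕ) (hn : 1 ≤ n) (κ : ℝ) (hκ : 0 < κ)
    (φ : ℝ → ℝ) (hφ_pos : ∀ ε ∈ Set.Ioo (0:ℝ) (1/2), 0 < φ ε)
    (hφ_top : Filter.Tendsto φ (nhdsWithin 0 (Set.Ioo 0 (1/2))) Filter.atTop)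
    (hφκ : Filter.Tendsto (fun ε => ε * φ ε) (nhdsWithin 0 (Set.Ioo 0 (1/2))) (nhds κ))
    (M : ℝ)
    (u : ℝ → ((Fin n → ℝ) × ℝ) → ℝ)
    (hu_meas : ∀ ε ∈ Set.Ioo (0:ℝ) (1/2), Measurable (u ε))
    (hu_bdd : ∀ ε ∈ Set.Ioo (0:ℝ) (1/2),
      ∫⁻ p in cyl n, ENNReal.ofReal (bWt (φ ε) ε p * (u ε p) ^ 2) ≤ ENNReal.ofReal M)
    (u₀ : (Fin n → ℝ) × ℝ → ℝ) (hu₀_meas : Measurable u₀)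
    (hu₀_L2 : ∫⁻ p in cyl n, ENNReal.ofReal ((u₀ p) ^ 2) < ⊤)
    (hu_conv : Filter.Tendsto
      (fun ε => ∫⁻ p in cyl n, ENNReal.ofReal ((u ε p - u₀ p) ^ 2))
      (nhdsWithin 0 (Set.Ioo 0 (1/2))) (nhds 0))
    (w0 w1 : (Fin n → ℝ) → ℝ) (hw0_meas : Measurable w0) (hw1_meas : Measurable w1)
    (hw0_L2 : ∫⁻ x' in unitBox n, ENNReal.ofReal ((w0 x') ^ 2) < ⊤)
    (hw1_L2 : ∫⁻ x' in unitBox n, ENNReal.ofReal ((w1 x') ^ 2) < ⊤)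
    (havg0 : Filter.Tendsto
      (fun ε => ∫⁻ x' in unitBox n,
        ENNReal.ofReal (((1/ε) * (∫ s in Set.Ioc (0:ℝ) ε, u ε (x', s)) - w0 x') ^ 2))
      (nhdsWithin 0 (Set.Ioo 0 (1/2))) (nhds 0))
    (havg1 : Filter.Tendsto
      (fun ε => ∫⁻ x' in unitBox n,
        ENNReal.ofReal (((1/ε) * (∫ s in Set.Ioc (1 - ε) 1, u ε (x', s)) - w1 x') ^ 2))
      (nhdsWithin 0 (Set.Ioo 0 (1/2))) (nhds 0))
    (f : (Fin n → ℝ) × ℝ → ℝ) (hf : Continuous f)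
    (hf_per : ∀ (p : (Fin n → ℝ) × ℝ) (i : Fin n), f (p.1 + Pi.single i 1, p.2) = f p) :
    Filter.Tendsto
      (fun ε => ∫ p in cyl n, bWt (φ ε) ε p * u ε p * f p)
      (nhdsWithin 0 (Set.Ioo 0 (1/2)))
      (nhds ((∫ p in cyl n, u₀ p * f p)
        + κ * (∫ x' in unitBox n, w0 x' * f (x', 0))
        + κ * (∫ x' in unitBox n, w1 x' * f (x', 1)))) :=
  boundary_layer_pairing_limit_general n κ φ hφ_top hφκ M u hu_meas hu_bdd u₀ hu₀_meas hu₀_L2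
    hu_conv w0 w1 hw0_meas hw1_meas hw0_L2 hw1_L2 havg0 havg1 f hf
end
end

section
/- For ε ∈ (0,1/2) let a_ε : (0,1) → (0,∞) be measurable with a_ε(x) ≥ 1 for all x ∈ [ε, 1−ε], and let f_ε : (0,1) → ℝ be continuously differentiable. Assume: (i) sup_{ε} ∫₀¹ f_ε(x)² dx < ∞; (ii) sup_{ε} ∫₀¹ a_ε(x) f_ε′(x)² dx < ∞; and (iii) there exists f ∈ L²(0,1) such that ∫₀¹ f_ε g dx → ∫₀¹ f g dx for every g ∈ L²(0,1) as ε → 0⁺. Then there exists a continuous function f̄ : [0,1] → ℝ with f̄ = f almost everywhere on (0,1), and f_ε(ε) → f̄(0) and f_ε(1−ε) → f̄(1) as ε → 0⁺. -/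
/-!
On `[ε, 1 - ε]` we have `a_ε ≥ 1`, so the energy bound controls `∫ |f_ε'|²` there, and by the
fundamental theorem of calculus and Cauchy–Schwarz every `f_ε` is `1/2`-Hölder on `[ε, 1 - ε]`
with one constant `K`. Extended by constants outside `[ε, 1 - ε]`, the family stays uniformly
`1/2`-Hölder on `ℝ`. Testing the weak convergence against indicators of balls in `(0, 1)` gives
convergence of the averages of `f_ε` over such balls. Since `f_ε(x)` is within `K √δ` of its
average over a ball of radius `δ` near `x`, the values `f_ε(x)`, `x ∈ [0, 1]`, converge as
`ε → 0`; the limit `f̄` is `1/2`-Hölder, and `f_ε(ε)`, `f_ε(1 - ε)` are the values of the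
extension at `0` and `1`. The same estimate makes the averages of `f` over balls around
`x ∈ (0, 1)` tend to `f̄(x)`, so the Lebesgue differentiation theorem gives `f̄ = f` a.e.
-/

open MeasureTheory
open scoped ENNReal
open Set Filter Metric
open scoped Topology NNReal Interval

theorem exists_tendsto_of_forall_eventually_dist_le {ι α : Type*} [PseudoMetricSpace α]
    [CompleteSpace α] {l : Filter ι} [l.NeBot] {u : ι → α}
    (h : ∀ η > 0, ∃ v : ι → α, (∃ a, Tendsto v l (𝓝 a)) ∧ ∀ᶠ i in l, dist (u i) (v i) ≤ η) :
    ∃ a, Tendsto u l (𝓝 a) := by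
  refine cauchy_map_iff_exists_tendsto.mp (Metric.cauchy_iff.mpr ⟨map_neBot, fun η hη => ?_⟩)
  obtain ⟨v, ⟨a, hv⟩, huv⟩ := h (η / 4) (by positivity)
  refine ⟨u '' {i | dist (u i) (v i) ≤ η / 4 ∧ dist (v i) a < η / 4},
    image_mem_map (huv.and (Metric.tendsto_nhds.mp hv _ (by positivity))), ?_⟩
  rintro _ ⟨i, ⟨hui, hvi⟩, rfl⟩ _ ⟨j, ⟨huj, hvj⟩, rfl⟩
  have hi := dist_triangle4 (u i) (v i) a (u j)
  have hj := dist_triangle (u j) (v j) a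
  rw [dist_comm a] at hi
  linarith

theorem tendsto_mul_rpow_nhdsGT_zero {K r : ℝ} (hr : 0 < r) :
    Tendsto (fun δ : ℝ => K * δ ^ r) (𝓝[>] 0) (𝓝 0) := by
  have h := ((Real.continuousAt_rpow_const 0 r (Or.inr hr.le)).tendsto).const_mul K
  rw [Real.zero_rpow hr.ne', mul_zero] at h
  exact h.mono_left nhdsWithin_le_nhds

theorem HolderOnWith.of_dist_le {X Y : Type*} [PseudoMetricSpace X] [PseudoMetricSpace Y]
    {C r : ℝ≥0} {f : X → Y} {s : Set X}
    (h : ∀ x ∈ s, ∀ y ∈ s, dist (f x) (f y) ≤ C * dist x y ^ (r : ℝ)) : HolderOnWith C r f s := by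
  intro x hx y hy
  rw [edist_dist, edist_dist, ENNReal.ofReal_rpow_of_nonneg dist_nonneg r.coe_nonneg,
    ← ENNReal.ofReal_coe_nnreal, ← ENNReal.ofReal_mul C.coe_nonneg]
  exact ENNReal.ofReal_le_ofReal (h x hx y hy)

theorem HolderOnWith.of_tendsto {ι X Y : Type*} [PseudoEMetricSpace X] [PseudoEMetricSpace Y]
    {l : Filter ι} [l.NeBot] {F : ι → X → Y} {G : X → Y} {s : Set X} {C r : ℝ≥0}
    (hF : ∀ᶠ i in l, HolderOnWith C r (F i) s)
    (hG : ∀ x ∈ s, Tendsto (fun i => F i x) l (𝓝 (G x))) : HolderOnWith C r G s :=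
  fun x hx y hy => le_of_tendsto ((hG x hx).edist (hG y hy)) (hF.mono fun _ hi => hi x hx y hy)

theorem HolderOnWith.holderWith_comp_max_min {Y : Type*} [PseudoEMetricSpace Y] {K r : ℝ≥0}
    {φ : ℝ → Y} {a b : ℝ} (hab : a ≤ b) (hφ : HolderOnWith K r φ (Icc a b)) :
    HolderWith K r fun x => φ (max a (min b x)) := by
  have h := hφ.comp_holderWith (LipschitzWith.id.const_min b |>.const_max a).holderWith
    fun x => ⟨le_max_left _ _, max_le hab (min_le_left _ _)⟩
  simpa [Function.comp_def] using h

theorem dist_setAverage_le {α E : Type*} [MeasurableSpace α] {μ : Measure α}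
    [NormedAddCommGroup E] [NormedSpace ℝ E] [CompleteSpace E] {s : Set α} {f : α → E}
    {y : E} {M : ℝ} (h0 : μ s ≠ 0) (hs : μ s ≠ ∞) (hf : IntegrableOn f s μ)
    (hfy : ∀ᵐ x ∂μ.restrict s, dist (f x) y ≤ M) : dist (⨍ x in s, f x ∂μ) y ≤ M :=
  (convex_closedBall y M).set_average_mem isClosed_closedBall h0 hs hfy hf

theorem sq_setAverage_le_setAverage_sq {α : Type*} [MeasurableSpace α] {μ : Measure α}
    {s : Set α} {f : α → ℝ} (h0 : μ s ≠ 0) (hs : μ s ≠ ∞) (hf : IntegrableOn f s μ)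
    (hf2 : IntegrableOn (fun x => f x ^ 2) s μ) :
    (⨍ x in s, f x ∂μ) ^ 2 ≤ ⨍ x in s, f x ^ 2 ∂μ :=
  (even_two.convexOn_pow (𝕜 := ℝ)).map_set_average_le (continuous_pow 2).continuousOn
    isClosed_univ h0 hs (ae_of_all _ fun _ => mem_univ _) hf hf2

theorem setIntegral_sq_le_of_lintegral_mul_sq_le {α : Type*} [MeasurableSpace α]
    {μ : Measure α} {s t : Set α} (hs : MeasurableSet s) (hst : s ⊆ t) {w g : α → ℝ}
    (hw : ∀ x ∈ s, 1 ≤ w x) {C : ℝ≥0}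
    (h : ∫⁻ x in t, ENNReal.ofReal (w x * g x ^ 2) ∂μ ≤ C) : ∫ x in s, g x ^ 2 ∂μ ≤ C := by
  by_cases hm : AEStronglyMeasurable (fun x => g x ^ 2) (μ.restrict s)
  · rw [integral_eq_lintegral_of_nonneg_ae (ae_of_all _ fun x => sq_nonneg _) hm]
    refine ENNReal.toReal_le_of_le_ofReal C.coe_nonneg ?_
    rw [ENNReal.ofReal_coe_nnreal]
    calc ∫⁻ x in s, ENNReal.ofReal (g x ^ 2) ∂μ
        ≤ ∫⁻ x in s, ENNReal.ofReal (w x * g x ^ 2) ∂μ := by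
          refine lintegral_mono_ae ((ae_restrict_mem hs).mono fun x hx => ?_)
          exact ENNReal.ofReal_le_ofReal (le_mul_of_one_le_left (sq_nonneg _) (hw x hx))
      _ ≤ ∫⁻ x in t, ENNReal.ofReal (w x * g x ^ 2) ∂μ := lintegral_mono_set hst
      _ ≤ C := h
  · rw [integral_non_aestronglyMeasurable hm]
    exact C.coe_nonneg

theorem integrableOn_of_lintegral_sq_lt_top {α : Type*} [MeasurableSpace α] {μ : Measure α}
    {s : Set α} (hs : μ s ≠ ∞) {g : α → ℝ} (hg : AEStronglyMeasurable g (μ.restrict s))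
    (h : ∫⁻ x in s, ENNReal.ofReal (g x ^ 2) ∂μ < ⊤) : IntegrableOn g s μ := by
  have : IsFiniteMeasure (μ.restrict s) := isFiniteMeasure_restrict.mpr hs
  refine ((memLp_two_iff_integrable_sq hg).mpr ⟨hg.pow 2, ?_⟩).integrable one_le_two
  exact (hasFiniteIntegral_iff_ofReal (ae_of_all _ fun x => sq_nonneg (g x))).mpr h

theorem tendsto_setIntegral_of_tendsto_integral_mul {α ι : Type*} [MeasurableSpace α]
    {μ : Measure α} {U S : Set α} (hU : μ U ≠ ∞) (hS : MeasurableSet S) (hSU : S ⊆ U)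
    {l : Filter ι} {u : ι → α → ℝ} {v : α → ℝ}
    (hweak : ∀ g : α → ℝ, Measurable g → ∫⁻ x in U, ENNReal.ofReal (g x ^ 2) ∂μ < ⊤ →
      Tendsto (fun i => ∫ x in U, u i x * g x ∂μ) l (𝓝 (∫ x in U, v x * g x ∂μ))) :
    Tendsto (fun i => ∫ x in S, u i x ∂μ) l (𝓝 (∫ x in S, v x ∂μ)) := by
  have hmul : ∀ w : α → ℝ, ∫ x in U, w x * S.indicator 1 x ∂μ = ∫ x in S, w x ∂μ := by
    intro w
    simp_rw [← indicator_mul_right, Pi.one_apply, mul_one]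
    rw [integral_indicator hS, Measure.restrict_restrict hS, inter_eq_left.mpr hSU]
  have hS2 : ∫⁻ x in U, ENNReal.ofReal (S.indicator 1 x ^ 2) ∂μ < ⊤ :=
    calc ∫⁻ x in U, ENNReal.ofReal (S.indicator 1 x ^ 2) ∂μ ≤ ∫⁻ _ in U, 1 ∂μ :=
          lintegral_mono fun x => by by_cases hx : x ∈ S <;> simp [hx]
      _ = μ U := by simp
      _ < ⊤ := hU.lt_top
  simpa only [hmul] using hweak _ (measurable_one.indicator hS) hS2

theorem sq_sub_le_of_setIntegral_sq_deriv_le {φ φ' : ℝ → ℝ} {a b C : ℝ}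
    (hφ : ∀ x ∈ Icc a b, HasDerivAt φ (φ' x) x) (hφ' : ContinuousOn φ' (Icc a b))
    (hE : ∫ x in Icc a b, φ' x ^ 2 ≤ C) {u v : ℝ} (hu : a ≤ u) (huv : u < v) (hv : v ≤ b) :
    (φ v - φ u) ^ 2 ≤ C * (v - u) := by
  have hsub : uIcc u v ⊆ Icc a b := by rw [uIcc_of_lt huv]; exact Icc_subset_Icc hu hv
  have hftc : ∫ x in u..v, φ' x = φ v - φ u :=
    intervalIntegral.integral_eq_sub_of_hasDerivAt (fun x hx => hφ x (hsub hx))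
      ((hφ'.mono hsub).intervalIntegrable)
  have hvol : volume (Ι u v) = ENNReal.ofReal (v - u) := by
    rw [uIoc_of_le huv.le, Real.volume_Ioc]
  have hint : ∀ g : ℝ → ℝ, ContinuousOn g (Icc a b) → IntegrableOn g (Ι u v) :=
    fun g hg => (hg.mono hsub).integrableOn_compact isCompact_uIcc |>.mono_set uIoc_subset_uIcc
  have hjensen := sq_setAverage_le_setAverage_sq (μ := volume) (s := Ι u v)
    (by simp [hvol, huv]) (by simp [hvol]) (hint φ' hφ') (hint _ (hφ'.pow 2))
  rw [interval_average_eq, interval_average_eq, hftc, smul_eq_mul, smul_eq_mul] at hjensen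
  have henergy : ∫ x in u..v, φ' x ^ 2 ≤ C :=
    calc ∫ x in u..v, φ' x ^ 2 = ∫ x in Ioc u v, φ' x ^ 2 := intervalIntegral.integral_of_le huv.le
      _ ≤ ∫ x in Icc a b, φ' x ^ 2 :=
          setIntegral_mono_set ((hφ'.pow 2).integrableOn_compact isCompact_Icc)
            (ae_of_all _ fun _ => sq_nonneg _)
            (Eventually.of_forall fun x hx => Ioc_subset_Icc_self.trans (Icc_subset_Icc hu hv) hx)
      _ ≤ C := hE
  have hvu : 0 < v - u := sub_pos.mpr huv
  calc (φ v - φ u) ^ 2 = (v - u) ^ 2 * ((v - u)⁻¹ * (φ v - φ u)) ^ 2 := by field_simp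
    _ ≤ (v - u) ^ 2 * ((v - u)⁻¹ * ∫ x in u..v, φ' x ^ 2) := by gcongr
    _ = (v - u) * ∫ x in u..v, φ' x ^ 2 := by field_simp
    _ ≤ C * (v - u) := by rw [mul_comm C]; gcongr

theorem holderOnWith_of_setIntegral_sq_deriv_le {φ φ' : ℝ → ℝ} {a b : ℝ} {C : ℝ≥0}
    (hφ : ∀ x ∈ Icc a b, HasDerivAt φ (φ' x) x) (hφ' : ContinuousOn φ' (Icc a b))
    (hE : ∫ x in Icc a b, φ' x ^ 2 ≤ C) : HolderOnWith (NNReal.sqrt C) (1 / 2) φ (Icc a b) := by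
  have hsq : ∀ x ∈ Icc a b, ∀ y ∈ Icc a b, (φ x - φ y) ^ 2 ≤ C * |x - y| := by
    intro x hx y hy
    rcases lt_trichotomy x y with hxy | rfl | hxy
    · rw [← neg_sub, neg_sq, abs_sub_comm, abs_of_pos (sub_pos.mpr hxy)]
      exact sq_sub_le_of_setIntegral_sq_deriv_le hφ hφ' hE hx.1 hxy hy.2
    · simp
    · rw [abs_of_pos (sub_pos.mpr hxy)]
      exact sq_sub_le_of_setIntegral_sq_deriv_le hφ hφ' hE hy.1 hxy hx.2
  refine HolderOnWith.of_dist_le fun x hx y hy => ?_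
  rw [Real.dist_eq, Real.dist_eq, Real.coe_sqrt, show ((1 / 2 : ℝ≥0) : ℝ) = 1 / 2 by norm_num,
    ← Real.sqrt_eq_rpow, ← Real.sqrt_mul C.coe_nonneg]
  exact Real.abs_le_sqrt (hsq x hx y hy)

def TendstoBallAverages {ι X E : Type*} [PseudoMetricSpace X] [MeasurableSpace X]
    [NormedAddCommGroup E] [NormedSpace ℝ E] (μ : Measure X) (U : Set X) (l : Filter ι)
    (F : ι → X → E) (g : X → E) : Prop :=
  ∀ c ρ, 0 < ρ → closedBall c ρ ⊆ U →
    Tendsto (fun i => ⨍ y in closedBall c ρ, F i y ∂μ) l (𝓝 (⨍ y in closedBall c ρ, g y ∂μ))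

section HolderFamily

variable {ι X E : Type*} [MetricSpace X] [ProperSpace X] [MeasurableSpace X] [BorelSpace X]
  {μ : Measure X} [μ.IsOpenPosMeasure] [IsFiniteMeasureOnCompacts μ]
  [NormedAddCommGroup E] [NormedSpace ℝ E] [CompleteSpace E] {K r : ℝ≥0}

theorem HolderWith.dist_setAverage_closedBall_le {φ : X → E} (hφ : HolderWith K r φ)
    (hr : 0 < r) {c x : X} {ρ δ : ℝ} (hρ : 0 < ρ) (hsub : closedBall c ρ ⊆ closedBall x δ) :
    dist (⨍ y in closedBall c ρ, φ y ∂μ) (φ x) ≤ K * δ ^ (r : ℝ) :=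
  dist_setAverage_le (measure_closedBall_pos μ c hρ).ne' measure_closedBall_lt_top.ne
    ((hφ.continuous hr).locallyIntegrable.integrableOn_isCompact (isCompact_closedBall c ρ))
    ((ae_restrict_mem measurableSet_closedBall).mono fun _ hy => hφ.dist_le_of_le (hsub hy))

variable {l : Filter ι} [l.NeBot] {F : ι → X → E} {g : X → E} {U : Set X}

theorem TendstoBallAverages.dist_setAverage_closedBall_le
    (havg : TendstoBallAverages μ U l F g) (hr : 0 < r) (hF : ∀ᶠ i in l, HolderWith K r (F i))
    {c x : X} {ρ δ : ℝ} {a : E} (hx : Tendsto (fun i => F i x) l (𝓝 a)) (hρ : 0 < ρ)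
    (hcU : closedBall c ρ ⊆ U) (hsub : closedBall c ρ ⊆ closedBall x δ) :
    dist (⨍ y in closedBall c ρ, g y ∂μ) a ≤ K * δ ^ (r : ℝ) :=
  le_of_tendsto ((havg c ρ hρ hcU).dist hx)
    (hF.mono fun _ hi => hi.dist_setAverage_closedBall_le hr hρ hsub)

theorem TendstoBallAverages.exists_tendsto_apply
    (havg : TendstoBallAverages μ U l F g) (hr : 0 < r) (hF : ∀ᶠ i in l, HolderWith K r (F i))
    (hU : IsOpen U) {x : X} (hx : x ∈ closure U) : ∃ a, Tendsto (fun i => F i x) l (𝓝 a) := by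
  refine exists_tendsto_of_forall_eventually_dist_le fun η hη => ?_
  have hsmall := (tendsto_mul_rpow_nhdsGT_zero (K := K) (NNReal.coe_pos.mpr hr)).eventually
    (eventually_le_nhds hη)
  obtain ⟨δ, hδη, hδ⟩ := (hsmall.and self_mem_nhdsWithin).exists
  obtain ⟨c, hcU, hxc⟩ := Metric.mem_closure_iff.mp hx (δ / 2) (half_pos hδ)
  obtain ⟨ε, hε, hball⟩ := Metric.isOpen_iff.mp hU c hcU
  set ρ := min (ε / 2) (δ / 2)
  have hρ : 0 < ρ := lt_min (half_pos hε) (half_pos hδ)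
  have hcU' : closedBall c ρ ⊆ U :=
    (closedBall_subset_ball ((min_le_left _ _).trans_lt (half_lt_self hε))).trans hball
  have hsub : closedBall c ρ ⊆ closedBall x δ :=
    closedBall_subset_closedBall' (by rw [dist_comm]; linarith [min_le_right (ε / 2) (δ / 2)])
  refine ⟨fun i => ⨍ y in closedBall c ρ, F i y ∂μ, ⟨_, havg c ρ hρ hcU'⟩, hF.mono fun i hi => ?_⟩
  rw [dist_comm]
  exact (hi.dist_setAverage_closedBall_le hr hρ hsub).trans hδη

theorem TendstoBallAverages.ae_eq [IsUnifLocDoublingMeasure μ]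
    (havg : TendstoBallAverages μ U l F g) (hr : 0 < r) (hF : ∀ᶠ i in l, HolderWith K r (F i))
    (hU : IsOpen U) (hg : IntegrableOn g U μ) {G : X → E}
    (hG : ∀ x ∈ U, Tendsto (fun i => F i x) l (𝓝 (G x))) : G =ᵐ[μ.restrict U] g := by
  have hLeb := IsUnifLocDoublingMeasure.ae_tendsto_average μ
    (hg.integrable_indicator hU.measurableSet).locallyIntegrable 1
  filter_upwards [ae_restrict_of_ae hLeb, ae_restrict_mem hU.measurableSet] with x hx hxU
  obtain ⟨ε, hε, hball⟩ := Metric.isOpen_iff.mp hU x hxU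
  have hsmall : ∀ᶠ ρ in 𝓝[>] (0 : ℝ), 0 < ρ ∧ closedBall x ρ ⊆ U :=
    eventually_of_mem (Ioo_mem_nhdsGT hε) fun ρ hρ =>
      ⟨hρ.1, (closedBall_subset_ball hρ.2).trans hball⟩
  have hlim_g : Tendsto (fun ρ => ⨍ y in closedBall x ρ, g y ∂μ) (𝓝[>] 0) (𝓝 (g x)) := by
    rw [← indicator_of_mem hxU g]
    refine (hx (fun _ => x) id tendsto_id ?_).congr' (hsmall.mono fun ρ hρ => ?_)
    · filter_upwards [self_mem_nhdsWithin] with ρ hρ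
      simpa using (le_of_lt hρ : 0 ≤ ρ)
    · exact setAverage_congr_fun measurableSet_closedBall
        (ae_of_all _ fun y hy => indicator_of_mem (hρ.2 hy) g)
  have hlim_G : Tendsto (fun ρ => ⨍ y in closedBall x ρ, g y ∂μ) (𝓝[>] 0) (𝓝 (G x)) := by
    rw [tendsto_iff_dist_tendsto_zero]
    refine squeeze_zero' (Eventually.of_forall fun _ => dist_nonneg) (hsmall.mono fun ρ hρ => ?_)
      (tendsto_mul_rpow_nhdsGT_zero (K := K) (NNReal.coe_pos.mpr hr))
    exact havg.dist_setAverage_closedBall_le hr hF (hG x hxU) hρ.1 hρ.2 le_rfl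
  exact tendsto_nhds_unique hlim_G hlim_g

end HolderFamily

/-- `φ` restricted to `[ε, 1 - ε]` and extended by constants, as `Set.IccExtend` does. -/
def clampExtend (φ : ℝ → ℝ) (ε x : ℝ) : ℝ := φ (max ε (min (1 - ε) x))

section ClampExtend

variable {φ : ℝ → ℝ} {ε : ℝ}

theorem clampExtend_of_mem {x : ℝ} (hx : x ∈ Icc ε (1 - ε)) : clampExtend φ ε x = φ x := by
  rw [clampExtend, min_eq_right hx.2, max_eq_right hx.1]

theorem clampExtend_zero (hε : ε ∈ Icc (0 : ℝ) (1 / 2)) : clampExtend φ ε 0 = φ ε := by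
  rw [clampExtend, min_eq_right (by linarith [hε.2]), max_eq_left hε.1]

theorem clampExtend_one (hε : ε ∈ Icc (0 : ℝ) (1 / 2)) : clampExtend φ ε 1 = φ (1 - ε) := by
  rw [clampExtend, min_eq_left (by linarith [hε.1]), max_eq_right (by linarith [hε.2])]

theorem holderWith_clampExtend {w φ' : ℝ → ℝ} (hε : ε ∈ Ioo (0 : ℝ) (1 / 2))
    (hw : ∀ x ∈ Icc ε (1 - ε), 1 ≤ w x) (hφ : ∀ x ∈ Ioo (0 : ℝ) 1, HasDerivAt φ (φ' x) x)
    (hφ' : ContinuousOn φ' (Ioo 0 1)) {C : ℝ≥0}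
    (hE : ∫⁻ x in Ioo (0 : ℝ) 1, ENNReal.ofReal (w x * φ' x ^ 2) ≤ C) :
    HolderWith (NNReal.sqrt C) (1 / 2) (clampExtend φ ε) := by
  have hsub : Icc ε (1 - ε) ⊆ Ioo 0 1 := Icc_subset_Ioo hε.1 (by linarith [hε.1])
  refine HolderOnWith.holderWith_comp_max_min (by linarith [hε.2]) ?_
  exact holderOnWith_of_setIntegral_sq_deriv_le (fun x hx => hφ x (hsub hx)) (hφ'.mono hsub)
    (setIntegral_sq_le_of_lintegral_mul_sq_le measurableSet_Icc hsub hw hE)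

end ClampExtend

theorem eventually_closedBall_subset_Icc {c ρ : ℝ} (hρ : 0 ≤ ρ)
    (h : closedBall c ρ ⊆ Ioo 0 1) : ∀ᶠ ε in 𝓝 (0 : ℝ), closedBall c ρ ⊆ Icc ε (1 - ε) := by
  rw [Real.closedBall_eq_Icc] at h ⊢
  have hl := (h ⟨le_rfl, by linarith⟩).1
  have hr := (h ⟨by linarith, le_rfl⟩).2
  filter_upwards [gt_mem_nhds (lt_min hl (sub_pos.mpr hr))] with ε hε
  exact Icc_subset_Icc (hε.le.trans (min_le_left _ _))
    (by linarith [min_le_right (c - ρ) (1 - (c + ρ))])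

theorem tendstoBallAverages_clampExtend {f : ℝ → ℝ → ℝ} {flim : ℝ → ℝ}
    (hweak : ∀ g : ℝ → ℝ, Measurable g →
      ∫⁻ x in Ioo (0 : ℝ) 1, ENNReal.ofReal (g x ^ 2) < ⊤ →
      Tendsto (fun ε => ∫ x in Ioo (0 : ℝ) 1, f ε x * g x) (𝓝[Ioo 0 (1 / 2)] 0)
        (𝓝 (∫ x in Ioo (0 : ℝ) 1, flim x * g x))) :
    TendstoBallAverages volume (Ioo 0 1) (𝓝[Ioo 0 (1 / 2)] 0)
      (fun ε => clampExtend (f ε) ε) flim := by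
  intro c ρ hρ hcU
  have hint := tendsto_setIntegral_of_tendsto_integral_mul (by simp) measurableSet_closedBall
    hcU hweak
  simp_rw [setAverage_eq] at hint ⊢
  refine (hint.const_smul _).congr' ?_
  filter_upwards [(eventually_closedBall_subset_Icc hρ.le hcU).filter_mono nhdsWithin_le_nhds]
    with ε hsub
  exact congrArg _ (setIntegral_congr_fun measurableSet_closedBall fun y hy =>
    (clampExtend_of_mem (hsub hy)).symm)

theorem trace_convergence_1d_general
    (a : ℝ → ℝ → ℝ)
    (ha_ge : ∀ ε ∈ Set.Ioo (0:ℝ) (1/2), ∀ x ∈ Set.Icc ε (1 - ε), 1 ≤ a ε x)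
    (f f' : ℝ → ℝ → ℝ)
    (hderiv : ∀ ε ∈ Set.Ioo (0:ℝ) (1/2), ∀ x ∈ Set.Ioo (0:ℝ) 1,
      HasDerivAt (f ε) (f' ε x) x)
    (hf'c : ∀ ε ∈ Set.Ioo (0:ℝ) (1/2), ContinuousOn (f' ε) (Set.Ioo 0 1))
    (hE : ∃ C : ℝ, ∀ ε ∈ Set.Ioo (0:ℝ) (1/2),
      ∫⁻ x in Set.Ioo (0:ℝ) 1, ENNReal.ofReal (a ε x * (f' ε x) ^ 2) ≤ ENNReal.ofReal C)
    (flim : ℝ → ℝ) (hflim_meas : Measurable flim)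
    (hflim_L2 : ∫⁻ x in Set.Ioo (0:ℝ) 1, ENNReal.ofReal ((flim x) ^ 2) < ⊤)
    (hweak : ∀ g : ℝ → ℝ, Measurable g →
      (∫⁻ x in Set.Ioo (0:ℝ) 1, ENNReal.ofReal ((g x) ^ 2)) < ⊤ →
      Filter.Tendsto (fun ε => ∫ x in Set.Ioo (0:ℝ) 1, f ε x * g x)
        (nhdsWithin 0 (Set.Ioo 0 (1/2)))
        (nhds (∫ x in Set.Ioo (0:ℝ) 1, flim x * g x))) :
    ∃ fbar : ℝ → ℝ, ContinuousOn fbar (Set.Icc 0 1) ∧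
      (∀ᵐ x ∂(volume.restrict (Set.Ioo (0:ℝ) 1)), fbar x = flim x) ∧
      Filter.Tendsto (fun ε => f ε ε) (nhdsWithin 0 (Set.Ioo 0 (1/2))) (nhds (fbar 0)) ∧
      Filter.Tendsto (fun ε => f ε (1 - ε)) (nhdsWithin 0 (Set.Ioo 0 (1/2)))
        (nhds (fbar 1)) := by
  set l : Filter ℝ := 𝓝[Ioo 0 (1 / 2)] 0
  have : l.NeBot := left_nhdsWithin_Ioo_neBot (by norm_num)
  obtain ⟨C, hC⟩ := hE
  have hF : ∀ᶠ ε in l, HolderWith (NNReal.sqrt C.toNNReal) (1 / 2) (clampExtend (f ε) ε) :=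
    eventually_mem_nhdsWithin.mono fun ε hε =>
      holderWith_clampExtend hε (ha_ge ε hε) (hderiv ε hε) (hf'c ε hε) (hC ε hε)
  have havg := tendstoBallAverages_clampExtend hweak
  have hlim : ∀ x ∈ Icc (0 : ℝ) 1, Tendsto (fun ε => clampExtend (f ε) ε x) l
      (𝓝 (limUnder l fun ε => clampExtend (f ε) ε x)) := fun x hx =>
    tendsto_nhds_limUnder (havg.exists_tendsto_apply (by norm_num) hF isOpen_Ioo
      (by rwa [closure_Ioo zero_ne_one]))
  have hmem : ∀ᶠ ε in l, ε ∈ Icc (0 : ℝ) (1 / 2) :=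
    eventually_mem_nhdsWithin.mono fun ε hε => Ioo_subset_Icc_self hε
  refine ⟨fun x => limUnder l fun ε => clampExtend (f ε) ε x, ?_, ?_, ?_, ?_⟩
  · exact (HolderOnWith.of_tendsto (hF.mono fun ε h => h.holderOnWith _) hlim).continuousOn
      (by norm_num)
  · exact havg.ae_eq (by norm_num) hF isOpen_Ioo
      (integrableOn_of_lintegral_sq_lt_top (by simp) hflim_meas.aestronglyMeasurable hflim_L2)
      fun x hx => hlim x (Ioo_subset_Icc_self hx)
  · exact (hlim 0 ⟨le_rfl, zero_le_one⟩).congr' (hmem.mono fun ε hε => clampExtend_zero hε)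
  · exact (hlim 1 ⟨zero_le_one, le_rfl⟩).congr' (hmem.mono fun ε hε => clampExtend_one hε)

/-- One-dimensional convergence of traces at distance `ε` from the boundary: for a family
`f_ε` of continuously differentiable functions on `(0,1)` with uniformly bounded `L²`
norms and uniformly bounded weighted energies `∫₀¹ a_ε |f_ε′|²` (with `a_ε ≥ 1` on
`[ε, 1−ε]`), converging weakly in `L²(0,1)` to `f`, the limit `f` has a continuous
representative `f̄` on `[0,1]` and `f_ε(ε) → f̄(0)`, `f_ε(1−ε) → f̄(1)` as `ε → 0⁺`. -/
theorem trace_convergence_1d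
    (a : ℝ → ℝ → ℝ)
    (ha_meas : ∀ ε ∈ Set.Ioo (0:ℝ) (1/2), Measurable (a ε))
    (ha_ge : ∀ ε ∈ Set.Ioo (0:ℝ) (1/2), ∀ x ∈ Set.Icc ε (1 - ε), 1 ≤ a ε x)
    (f f' : ℝ → ℝ → ℝ)
    (hderiv : ∀ ε ∈ Set.Ioo (0:ℝ) (1/2), ∀ x ∈ Set.Ioo (0:ℝ) 1,
      HasDerivAt (f ε) (f' ε x) x)
    (hf'c : ∀ ε ∈ Set.Ioo (0:ℝ) (1/2), ContinuousOn (f' ε) (Set.Ioo 0 1))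
    (hL2 : ∃ C : ℝ, ∀ ε ∈ Set.Ioo (0:ℝ) (1/2),
      ∫⁻ x in Set.Ioo (0:ℝ) 1, ENNReal.ofReal ((f ε x) ^ 2) ≤ ENNReal.ofReal C)
    (hE : ∃ C : ℝ, ∀ ε ∈ Set.Ioo (0:ℝ) (1/2),
      ∫⁻ x in Set.Ioo (0:ℝ) 1, ENNReal.ofReal (a ε x * (f' ε x) ^ 2) ≤ ENNReal.ofReal C)
    (flim : ℝ → ℝ) (hflim_meas : Measurable flim)
    (hflim_L2 : ∫⁻ x in Set.Ioo (0:ℝ) 1, ENNReal.ofReal ((flim x) ^ 2) < ⊤)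
    (hweak : ∀ g : ℝ → ℝ, Measurable g →
      (∫⁻ x in Set.Ioo (0:ℝ) 1, ENNReal.ofReal ((g x) ^ 2)) < ⊤ →
      Filter.Tendsto (fun ε => ∫ x in Set.Ioo (0:ℝ) 1, f ε x * g x)
        (nhdsWithin 0 (Set.Ioo 0 (1/2)))
        (nhds (∫ x in Set.Ioo (0:ℝ) 1, flim x * g x))) :
    ∃ fbar : ℝ → ℝ, ContinuousOn fbar (Set.Icc 0 1) ∧
      (∀ᵐ x ∂(volume.restrict (Set.Ioo (0:ℝ) 1)), fbar x = flim x) ∧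
      Filter.Tendsto (fun ε => f ε ε) (nhdsWithin 0 (Set.Ioo 0 (1/2))) (nhds (fbar 0)) ∧
      Filter.Tendsto (fun ε => f ε (1 - ε)) (nhdsWithin 0 (Set.Ioo 0 (1/2)))
        (nhds (fbar 1)) :=
  trace_convergence_1d_general a ha_ge f f' hderiv hf'c hE flim hflim_meas hflim_L2 hweak
end
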